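/- Let β ∈ [0, 1] and r > 5/2 − β. There exists C = C(r, β) > 0 such that for all τ > 0 and all f ∈ H^{r+2β}(𝕋): ‖P₁^τ(f)‖_r ≤ C τ² ‖f‖_{r+2β}². In particular, taking β = 0: for every r > 5/2, ‖P₁^τ(f)‖_r ≤ C τ² ‖f‖_r² with no loss of regularity. -/

import Mathlib

open MeasureTheory Complex

noncomputable section

local notation "𝕋" => AddCircle (2 * Real.pi)

instance : Fact (0 < 2 * Real.pi) := ⟨by positivity⟩

def fc (f : 𝕋 → ℂ) (k : ℤ) : ℂ := fourierCoeff f k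

def sNormSq (α : ℝ) (f : 𝕋 → ℂ) : ℝ :=
  ∑' k : ℤ, (1 + (k : ℝ) ^ 2) ^ α * ‖fc f k‖ ^ 2

def sNorm (α : ℝ) (f : 𝕋 → ℂ) : ℝ := Real.sqrt (sNormSq α f)

def MemH (α : ℝ) (f : 𝕋 → ℂ) : Prop :=
  MemLp f 2 volume ∧ Summable fun k : ℤ => (1 + (k : ℝ) ^ 2) ^ α * ‖fc f k‖ ^ 2

def mulOp (m : ℤ → ℂ) (f : 𝕋 → ℂ) : 𝕋 → ℂ :=
  fun x => ∑' k : ℤ, m k * fc f k * fourier k x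

def cconj (f : 𝕋 → ℂ) : 𝕋 → ℂ := fun x => (starRingEnd ℂ) (f x)

/-- Bessel potential `J^α`, with symbol `(1+k²)^{α/2}`. -/
def Jop (α : ℝ) : (𝕋 → ℂ) → (𝕋 → ℂ) :=
  mulOp fun k => (((1 + (k : ℝ) ^ 2) ^ (α / 2) : ℝ) : ℂ)

/-- The operator `|∂ₓ|^α`, with symbol `|k|^α` for `k ≠ 0`, annihilating the zero mode. -/
def absD (α : ℝ) : (𝕋 → ℂ) → (𝕋 → ℂ) :=
  mulOp fun k => if k = 0 then 0 else ((|(k : ℝ)| ^ α : ℝ) : ℂ)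

/-- `∂ₓ^m` for `m : ℤ`: symbol `(ik)^m` for `k ≠ 0`, annihilating the zero mode. -/
def Dpow (m : ℤ) : (𝕋 → ℂ) → (𝕋 → ℂ) :=
  mulOp fun k => if k = 0 then 0 else (Complex.I * (k : ℂ)) ^ m

/-- Symbol of `⟨∂ₓ²⟩`: `√(k² + k⁴)`. -/
def brSym (k : ℤ) : ℝ := Real.sqrt ((k : ℝ) ^ 2 + (k : ℝ) ^ 4)

/-- `e^{it∂ₓ²}`, with symbol `e^{-itk²}`. -/
def eitDxx (t : ℝ) : (𝕋 → ℂ) → (𝕋 → ℂ) :=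
  mulOp fun k => Complex.exp (-(Complex.I * t * (k : ℂ) ^ 2))

/-- `e^{it∂ₓ²} - 1`, with symbol `e^{-itk²} - 1`. -/
def eitDxxm1 (t : ℝ) : (𝕋 → ℂ) → (𝕋 → ℂ) :=
  mulOp fun k => Complex.exp (-(Complex.I * t * (k : ℂ) ^ 2)) - 1

/-- `⟨∂ₓ²⟩⁻¹`, symbol `(k²+k⁴)^{-1/2}` for `k ≠ 0`, `0` at `k = 0`. -/
def brInv : (𝕋 → ℂ) → (𝕋 → ℂ) :=
  mulOp fun k => if k = 0 then 0 else (((brSym k)⁻¹ : ℝ) : ℂ)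

/-- Symbol of `A = ⟨∂ₓ²⟩ + ∂ₓ²`: `√(k²+k⁴) - k²`. -/
def Asym (k : ℤ) : ℝ := brSym k - (k : ℝ) ^ 2

/-- `A = ⟨∂ₓ²⟩ + ∂ₓ²`. -/
def Aop : (𝕋 → ℂ) → (𝕋 → ℂ) := mulOp fun k => ((Asym k : ℝ) : ℂ)

/-- `e^{itA} - 1`. -/
def eitAm1 (t : ℝ) : (𝕋 → ℂ) → (𝕋 → ℂ) :=
  mulOp fun k => Complex.exp (Complex.I * t * ((Asym k : ℝ) : ℂ)) - 1

/-- Symbol of `B = ⟨∂ₓ²⟩⁻¹ ∂ₓ²`: `-k²/√(k²+k⁴)` for `k ≠ 0`, `0` at `k = 0`. -/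
def Bsym (k : ℤ) : ℝ := if k = 0 then 0 else -(k : ℝ) ^ 2 / brSym k

/-- `B = ⟨∂ₓ²⟩⁻¹ ∂ₓ²`. -/
def Bop : (𝕋 → ℂ) → (𝕋 → ℂ) := mulOp fun k => ((Bsym k : ℝ) : ℂ)

/-- `e^{it⟨∂ₓ²⟩}`, with symbol `e^{it√(k²+k⁴)}`. -/
def eitBr (t : ℝ) : (𝕋 → ℂ) → (𝕋 → ℂ) :=
  mulOp fun k => Complex.exp (Complex.I * t * ((brSym k : ℝ) : ℂ))

/-- `e^{it⟨∂ₓ²⟩} - 1`. -/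
def eitBrm1 (t : ℝ) : (𝕋 → ℂ) → (𝕋 → ℂ) :=
  mulOp fun k => Complex.exp (Complex.I * t * ((brSym k : ℝ) : ℂ)) - 1

/-- `B^τ = B e^{iτ⟨∂ₓ²⟩}`, as a single multiplier. -/
def Btau (τ : ℝ) : (𝕋 → ℂ) → (𝕋 → ℂ) :=
  mulOp fun k => ((Bsym k : ℝ) : ℂ) * Complex.exp (Complex.I * τ * ((brSym k : ℝ) : ℂ))

/-- `ψ₁(y) = ∫₀¹ e^{ys} ds`. -/
def psi1 (y : ℂ) : ℂ := ∫ s in (0 : ℝ)..1, Complex.exp (y * s)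

/-- `ψ₁(it∂ₓ²)`, with symbol `ψ₁(-itk²)`. -/
def psiOp (t : ℝ) : (𝕋 → ℂ) → (𝕋 → ℂ) :=
  mulOp fun k => psi1 (-(Complex.I * t * (k : ℂ) ^ 2))

/-- Sobolev norm (squared) of a Fourier coefficient sequence. -/
def seqNormSq (α : ℝ) (c : ℤ → ℂ) : ℝ :=
  ∑' k : ℤ, (1 + (k : ℝ) ^ 2) ^ α * ‖c k‖ ^ 2

def seqNorm (α : ℝ) (c : ℤ → ℂ) : ℝ := Real.sqrt (seqNormSq α c)

/-- Fourier coefficients of `P₁^τ(f)`. -/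
def P1coef (τ : ℝ) (f : 𝕋 → ℂ) (k : ℤ) : ℂ :=
  if k = 0 then 0 else
    ∑' k₁ : ℤ, ((k₁ : ℂ) ^ 2 / (k : ℂ) ^ 2) *
      (∫ s in (0 : ℝ)..τ,
        (Complex.exp (-(2 * Complex.I * s * (((k - k₁ : ℤ)) : ℂ) ^ 2)) - 1) *
        (Complex.exp (-(2 * Complex.I * s * (k : ℂ) * (k₁ : ℂ))) - 1)) *
      fc (cconj f) k₁ * fc (cconj f) (k - k₁)

/-- Fourier coefficients of `P₂^τ(f)`. -/
def P2coef (τ : ℝ) (f : 𝕋 → ℂ) (k : ℤ) : ℂ :=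
  if k = 0 then 0 else
    ∑' k₁ : ℤ, ((2 * (k₁ : ℂ) * (((k - k₁ : ℤ)) : ℂ)) / (k : ℂ) ^ 2) *
      (∫ s in (0 : ℝ)..τ,
        (Complex.exp (-(2 * Complex.I * s * (k : ℂ) ^ 2)) - 1) *
        (Complex.exp (2 * Complex.I * s * (k₁ : ℂ) * (((k - k₁ : ℤ)) : ℂ)) - 1)) *
      fc (cconj f) k₁ * fc (cconj f) (k - k₁)

def L1op (τ : ℝ) (f : 𝕋 → ℂ) : 𝕋 → ℂ :=
  (-(Complex.I / 2)) • Dpow (-2) ((eitDxx (2 * τ) (Dpow (-2) (cconj f))) * (Dpow 2 (cconj f)))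
    + (Complex.I / 2) • Dpow (-2) ((Dpow 2 (cconj f)) * (Dpow (-2) (cconj f)))

def L2op (τ : ℝ) (f : 𝕋 → ℂ) : 𝕋 → ℂ :=
  (-(Complex.I / 2)) • eitDxx τ (Dpow (-3) ((eitDxx τ (Dpow 1 (cconj f))) * (eitDxx (-τ) (cconj f))))
    + (Complex.I / 2) • Dpow (-3) ((Dpow 1 (cconj f)) * (cconj f))
    - (τ : ℂ) • Dpow (-2) ((Dpow 2 (cconj f)) * (cconj f))

def L3op (τ : ℝ) (f : 𝕋 → ℂ) : 𝕋 → ℂ :=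
  (-Complex.I) • Dpow (-4) (eitDxxm1 (2 * τ) ((Dpow 1 (cconj f)) * (Dpow 1 (cconj f))))

def L4op (τ : ℝ) (f : 𝕋 → ℂ) : 𝕋 → ℂ :=
  Complex.I • Dpow (-2) (eitDxx (-τ) ((eitDxx τ (cconj f)) * (eitDxx τ (cconj f))))
    - Complex.I • Dpow (-2) ((cconj f) * (cconj f))
    - ((2 * τ : ℝ) : ℂ) • Dpow (-2) ((Dpow 1 (cconj f)) * (Dpow 1 (cconj f)))

def I1op (τ : ℝ) (f : 𝕋 → ℂ) : 𝕋 → ℂ :=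
  (Complex.I / 2) • ((Dpow (-1) f) * (Dpow (-1) f)
    - eitDxx τ ((eitDxx (-τ) (Dpow (-1) f)) * (eitDxx (-τ) (Dpow (-1) f))))

def I2op (τ : ℝ) (f : 𝕋 → ℂ) : 𝕋 → ℂ :=
  (-(Complex.I / 2)) • eitDxx τ (Dpow (-1) ((eitDxx (-τ) f) * (eitDxx τ (Dpow (-1) (cconj f)))))
    + (Complex.I / 2) • Dpow (-1) (f * (Dpow (-1) (cconj f)))
    + fun _ => ((τ * sNormSq 0 f : ℝ) : ℂ)

/-- The first-order low regularity exponential integrator `Ψ₁^τ` at time level `t_n`. -/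
def Psi1 (τ a b tn : ℝ) (f : 𝕋 → ℂ) : 𝕋 → ℂ :=
  eitBr τ f
    - (Complex.I / 4) • Btau τ ((2 : ℂ) • L1op τ f + (2 : ℂ) • L2op τ f + L3op τ f
        + L4op τ f + I1op τ f + (2 : ℂ) • I2op τ f)
    - (Complex.I * τ * ((a * tn + b : ℝ) : ℂ)) • Btau τ (f + psiOp (2 * τ) (cconj f))

/-- The additional-regularity exponent `p(r)` (with parameter `ε` standing for `+`). -/
def preg (ε r : ℝ) : ℝ :=
  if r = 1 then 1
  else if r ≤ 7/6 then 3 - 2*r + ε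
  else if r ≤ 17/12 then 2/3
  else if r ≤ 3/2 then 7/2 - 2*r + ε
  else if r < 5/2 then 5/4 - r/2
  else if r = 5/2 then ε
  else 0

/-- The additional-regularity exponent `q(r)` for `P₂`. -/
def qreg (r : ℝ) : ℝ := if r ≤ 5/2 then 5/4 - r/2 else 0

/-! Write `⟨x⟩ = √(1 + x²)` and `c_j = |(f̄)^_j| = |f̂_{-j}|`. Bounding one factor of the integrand
by `|θ s|` and the other by `2` gives `|∫₀^τ (e^{iθs} - 1)(e^{iφs} - 1) ds| ≤ τ² min(|θ|, |φ|)`, so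
`|P₁^τ(f)^_k| ≤ 2τ² ∑_{k₁} (k₁²/k²) min((k-k₁)², |k k₁|) c_{k₁} c_{k-k₁}`. Splitting according to
whether `|k - k₁| ≤ |k₁|`, the weight `⟨k⟩^r (k₁²/k²) min(…)` is at most
`2^α (k₁² ⟨k-k₁⟩^α + ⟨k₁⟩^α (k-k₁)²)` for `α = r + 2β ≥ max(r, 2)`. Hence
`⟨k⟩^r |P₁^τ(f)^_k| ≤ 2^{α+2} τ² ∑_j (j² ⟨j⟩^{-α}) b_j b_{k-j}` with `b_j = ⟨j⟩^α c_j`.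
Cauchy–Schwarz in `j` and `∑_k ∑_j b_j² b_{k-j}² = (∑_j b_j²)²` bound the `ℓ²` norm of the right
side by `2^{α+2} τ² ‖j² ⟨j⟩^{-α}‖_{ℓ²} ‖f‖_α²`, and `‖j² ⟨j⟩^{-α}‖_{ℓ²}` is finite because
`α > 5/2`. All sums are taken in `ℝ≥0∞`, so no summability has to be tracked. -/

open scoped ENNReal

def bracket (x : ℝ) : ℝ := √(1 + x ^ 2)

lemma sq_bracket (x : ℝ) : bracket x ^ 2 = 1 + x ^ 2 :=
  Real.sq_sqrt (by positivity)

lemma one_le_bracket (x : ℝ) : 1 ≤ bracket x :=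
  Real.one_le_sqrt.2 (by nlinarith)

lemma bracket_pos (x : ℝ) : 0 < bracket x :=
  one_pos.trans_le (one_le_bracket x)

lemma abs_le_bracket (x : ℝ) : |x| ≤ bracket x :=
  Real.abs_le_sqrt (by linarith)

lemma bracket_neg (x : ℝ) : bracket (-x) = bracket x := by
  simp [bracket]

lemma sq_le_bracket_sq (x : ℝ) : x ^ 2 ≤ bracket x ^ 2 := by
  rw [sq_bracket]; linarith

lemma one_add_sq_rpow (x s : ℝ) : (1 + x ^ 2) ^ s = (bracket x ^ s) ^ 2 := by
  have h := (bracket_pos x).le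
  rw [← sq_bracket, ← Real.rpow_natCast_mul h, mul_comm, Real.rpow_mul_natCast h]

lemma bracket_le_two_mul (x y : ℝ) (h : |x| ≤ 2 * |y|) : bracket x ≤ 2 * bracket y := by
  have hx : x ^ 2 ≤ 4 * y ^ 2 := by
    nlinarith [sq_abs x, sq_abs y, abs_nonneg x]
  refine (sq_le_sq₀ (bracket_pos x).le (mul_nonneg zero_le_two (bracket_pos y).le)).1 ?_
  rw [mul_pow, sq_bracket, sq_bracket]
  linarith

lemma bracket_rpow_le (x y : ℝ) {p q : ℝ} (hpq : p ≤ q) (hq : 0 ≤ q) (h : |x| ≤ 2 * |y|) :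
    bracket x ^ p ≤ (2 * bracket y) ^ q :=
  calc bracket x ^ p ≤ bracket x ^ q := Real.rpow_le_rpow_of_exponent_le (one_le_bracket x) hpq
    _ ≤ (2 * bracket y) ^ q :=
      Real.rpow_le_rpow (bracket_pos x).le (bracket_le_two_mul x y h) hq

lemma bracket_rpow_div_sq_le (r : ℝ) {x : ℝ} (hx : 1 ≤ |x|) :
    bracket x ^ r / x ^ 2 ≤ 2 * bracket x ^ (r - 2) := by
  have hx2 : 1 ≤ x ^ 2 := by nlinarith [sq_abs x]
  have hsplit : bracket x ^ r = bracket x ^ (r - 2) * (1 + x ^ 2) := by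
    rw [← sq_bracket, ← Real.rpow_natCast, ← Real.rpow_add (bracket_pos x)]
    norm_num
  rw [div_le_iff₀ (by linarith), hsplit]
  nlinarith [Real.rpow_pos_of_pos (bracket_pos x) (r - 2)]

lemma summable_bracket_rpow_neg {b : ℝ} (hb : 1 < b) :
    Summable fun j : ℤ => bracket j ^ (-b) := by
  refine (Real.summable_abs_int_rpow hb).of_norm_bounded_eventually ?_
  filter_upwards [Filter.eventually_cofinite_ne 0] with j hj
  rw [Real.norm_of_nonneg (Real.rpow_pos_of_pos (bracket_pos j) _).le]
  exact Real.rpow_le_rpow_of_nonpos (abs_pos.2 (Int.cast_ne_zero.2 hj)) (abs_le_bracket j)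
    (by linarith)

lemma bracket_rpow_mul_min_le {r α : ℝ} (hrα : r ≤ α) (hα : 2 ≤ α) {x : ℝ} (hx : 1 ≤ |x|)
    (y : ℝ) :
    bracket x ^ r * (y ^ 2 / x ^ 2) * min ((x - y) ^ 2) |x * y| ≤
      2 ^ α * (y ^ 2 * bracket (x - y) ^ α + bracket y ^ α * (x - y) ^ 2) := by
  set z := x - y
  have hbx := bracket_pos x
  have hby := bracket_pos y
  have hbz := bracket_pos z
  have htri : |x| ≤ |y| + |z| := by simpa [z] using abs_add_le y z
  have hweight : bracket x ^ r * (y ^ 2 / x ^ 2) * min (z ^ 2) |x * y| ≤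
      2 * bracket x ^ (r - 2) * y ^ 2 * min (z ^ 2) |x * y| := by
    rw [mul_div_assoc', mul_div_right_comm]
    gcongr
    exact bracket_rpow_div_sq_le r hx
  refine hweight.trans ?_
  rcases le_total |z| |y| with hzy | hyz
  · have hpow := bracket_rpow_le x y (by linarith : r - 2 ≤ α - 2) (by linarith) (by linarith)
    calc 2 * bracket x ^ (r - 2) * y ^ 2 * min (z ^ 2) |x * y|
        ≤ 2 * (2 * bracket y) ^ (α - 2) * bracket y ^ 2 * z ^ 2 := by
          gcongr 2 * ?_ * ?_ * ?_
          exacts [sq_le_bracket_sq y, min_le_left _ _]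
      _ = 2 ^ (α - 1) * (bracket y ^ α * z ^ 2) := by
          have h2 : (2 : ℝ) * 2 ^ (α - 2) = 2 ^ (α - 1) := by
            rw [← Real.rpow_one_add' zero_le_two (by linarith)]; ring_nf
          have hy : bracket y ^ (α - 2) * bracket y ^ 2 = bracket y ^ α := by
            rw [← Real.rpow_natCast, ← Real.rpow_add hby]; norm_num
          rw [Real.mul_rpow zero_le_two hby.le, ← h2, ← hy]
          ring
      _ ≤ 2 ^ α * (y ^ 2 * bracket z ^ α + bracket y ^ α * z ^ 2) := by
          gcongr ?_ * ?_
          · exact Real.rpow_le_rpow_of_exponent_le one_le_two (by linarith)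
          · exact le_add_of_nonneg_left (by positivity)
  · have hpow := bracket_rpow_le x z (by linarith : r - 1 ≤ α - 1) (by linarith) (by linarith)
    calc 2 * bracket x ^ (r - 2) * y ^ 2 * min (z ^ 2) |x * y|
        ≤ 2 * bracket x ^ (r - 2) * y ^ 2 * (bracket x * bracket z) := by
          gcongr
          refine (min_le_right _ _).trans ?_
          rw [abs_mul]
          exact mul_le_mul (abs_le_bracket x) (hyz.trans (abs_le_bracket z)) (abs_nonneg y)
            hbx.le
      _ = 2 * bracket x ^ (r - 1) * y ^ 2 * bracket z := by
          rw [show r - 1 = (r - 2) + 1 by ring, Real.rpow_add_one hbx.ne']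
          ring
      _ ≤ 2 * (2 * bracket z) ^ (α - 1) * y ^ 2 * bracket z := by gcongr
      _ = 2 ^ α * (y ^ 2 * bracket z ^ α) := by
          have h2 : (2 : ℝ) * 2 ^ (α - 1) = 2 ^ α := by
            rw [← Real.rpow_one_add' zero_le_two (by linarith)]; ring_nf
          have hz : bracket z ^ (α - 1) * bracket z = bracket z ^ α := by
            rw [← Real.rpow_add_one hbz.ne']; ring_nf
          rw [Real.mul_rpow zero_le_two hbz.le, ← h2, ← hz]
          ring
      _ ≤ 2 ^ α * (y ^ 2 * bracket z ^ α + bracket y ^ α * z ^ 2) := by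
          gcongr
          exact le_add_of_nonneg_right (by positivity)

lemma norm_exp_I_mul_ofReal_sub_one_le_two (θ : ℝ) : ‖Complex.exp (I * θ) - 1‖ ≤ 2 := by
  rw [Complex.norm_exp_I_mul_ofReal_sub_one, norm_mul, Real.norm_two]
  have := Real.abs_sin_le_one (θ / 2)
  rw [Real.norm_eq_abs]
  linarith

lemma norm_exp_I_mul_sub_one_mul_le (θ φ : ℝ) :
    ‖(Complex.exp (I * θ) - 1) * (Complex.exp (I * φ) - 1)‖ ≤ 2 * min |θ| |φ| := by
  have hθ := Real.norm_exp_I_mul_ofReal_sub_one_le (x := θ)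
  have hφ := Real.norm_exp_I_mul_ofReal_sub_one_le (x := φ)
  rw [Real.norm_eq_abs] at hθ hφ
  rw [norm_mul, mul_min_of_nonneg _ _ zero_le_two]
  refine le_min ?_ ?_
  · nlinarith [norm_exp_I_mul_ofReal_sub_one_le_two φ, norm_nonneg (Complex.exp (I * θ) - 1)]
  · nlinarith [norm_exp_I_mul_ofReal_sub_one_le_two θ, norm_nonneg (Complex.exp (I * φ) - 1)]

lemma norm_integral_exp_sub_one_mul_le {τ : ℝ} (hτ : 0 ≤ τ) (a b : ℝ) :
    ‖∫ s in (0 : ℝ)..τ, (Complex.exp (-(2 * I * s * a)) - 1) * (Complex.exp (-(2 * I * s * b)) - 1)‖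
      ≤ 2 * τ ^ 2 * min |a| |b| := by
  have hbound : ∀ s ∈ Set.Ioc 0 τ,
      ‖(Complex.exp (-(2 * I * s * a)) - 1) * (Complex.exp (-(2 * I * s * b)) - 1)‖ ≤
        4 * min |a| |b| * s := by
    intro s hs
    have harg : ∀ c : ℝ, -(2 * I * s * c) = I * ((-2 * s * c : ℝ) : ℂ) := by
      intro c; push_cast; ring
    have hmin : min |-2 * s * a| |-2 * s * b| = 2 * s * min |a| |b| := by
      simp only [abs_mul, abs_neg, abs_two, abs_of_pos hs.1]
      exact (mul_min_of_nonneg _ _ (by linarith [hs.1])).symm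
    rw [harg a, harg b]
    refine (norm_exp_I_mul_sub_one_mul_le _ _).trans_eq ?_
    rw [hmin]
    ring
  calc _ ≤ ∫ s in (0 : ℝ)..τ, 4 * min |a| |b| * s :=
        intervalIntegral.norm_integral_le_of_norm_le hτ (Filter.Eventually.of_forall hbound)
          (by apply Continuous.intervalIntegrable; fun_prop)
    _ = 2 * τ ^ 2 * min |a| |b| := by
        rw [intervalIntegral.integral_const_mul, integral_id]
        ring

lemma ENNReal.sum_mul_sq_le {ι : Type*} (s : Finset ι) (f g : ι → ℝ≥0∞) :
    (∑ i ∈ s, f i * g i) ^ 2 ≤ (∑ i ∈ s, f i ^ 2) * ∑ i ∈ s, g i ^ 2 := by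
  have h := ENNReal.inner_le_Lp_mul_Lq s f g Real.HolderConjugate.two_two
  simp only [ENNReal.rpow_two] at h
  have hsq : ∀ x : ℝ≥0∞, (x ^ (1 / 2 : ℝ)) ^ 2 = x := fun x => by
    rw [← ENNReal.rpow_natCast, ← ENNReal.rpow_mul]; norm_num
  calc _ ≤ _ := pow_le_pow_left' h 2
    _ = _ := by rw [mul_pow, hsq, hsq]

lemma ENNReal.tsum_mul_sq_le {ι : Type*} (f g : ι → ℝ≥0∞) :
    (∑' i, f i * g i) ^ 2 ≤ (∑' i, f i ^ 2) * ∑' i, g i ^ 2 :=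
  le_of_tendsto' ((ENNReal.continuous_pow 2).tendsto _ |>.comp ENNReal.summable.hasSum)
    fun s => (ENNReal.sum_mul_sq_le s f g).trans
      (mul_le_mul' (ENNReal.sum_le_tsum s) (ENNReal.sum_le_tsum s))

lemma ENNReal.tsum_tsum_mul_sub {G : Type*} [AddCommGroup G] (u v : G → ℝ≥0∞) :
    ∑' k, ∑' j, u j * v (k - j) = (∑' j, u j) * ∑' j, v j := by
  rw [ENNReal.tsum_comm, ← ENNReal.tsum_mul_right]
  refine tsum_congr fun j => ?_
  rw [ENNReal.tsum_mul_left, ← (Equiv.subRight j).tsum_eq v]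
  rfl

lemma ENNReal.tsum_sq_tsum_mul_mul_sub_le {G : Type*} [AddCommGroup G] (w b : G → ℝ≥0∞) :
    ∑' k, (∑' j, w j * (b j * b (k - j))) ^ 2 ≤ (∑' j, w j ^ 2) * (∑' j, b j ^ 2) ^ 2 :=
  calc ∑' k, (∑' j, w j * (b j * b (k - j))) ^ 2
      ≤ ∑' k, (∑' j, w j ^ 2) * ∑' j, b j ^ 2 * b (k - j) ^ 2 :=
        ENNReal.tsum_le_tsum fun k => (ENNReal.tsum_mul_sq_le _ _).trans_eq (by simp_rw [mul_pow])
    _ = (∑' j, w j ^ 2) * (∑' j, b j ^ 2) ^ 2 := by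
        rw [ENNReal.tsum_mul_left, ENNReal.tsum_tsum_mul_sub (b · ^ 2) (b · ^ 2), sq]

lemma fc_cconj (f : 𝕋 → ℂ) (n : ℤ) : fc (cconj f) n = starRingEnd ℂ (fc f (-n)) := by
  simp only [fc, cconj, fourierCoeff, ← integral_conj, smul_eq_mul, map_mul, ← fourier_neg,
    neg_neg]

lemma norm_fc_cconj (f : 𝕋 → ℂ) (n : ℤ) : ‖fc (cconj f) n‖ = ‖fc f (-n)‖ := by
  rw [fc_cconj, Complex.norm_conj]

def bracketWeighted (α : ℝ) (c : ℤ → ℂ) (k : ℤ) : ℝ := bracket k ^ α * ‖c k‖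

lemma bracketWeighted_nonneg (α : ℝ) (c : ℤ → ℂ) (k : ℤ) : 0 ≤ bracketWeighted α c k :=
  mul_nonneg (Real.rpow_pos_of_pos (bracket_pos k) α).le (norm_nonneg _)

def eBracketWeighted (α : ℝ) (c : ℤ → ℂ) (k : ℤ) : ℝ≥0∞ := ENNReal.ofReal (bracketWeighted α c k)

lemma eBracketWeighted_sq (α : ℝ) (c : ℤ → ℂ) (k : ℤ) :
    eBracketWeighted α c k ^ 2 = ENNReal.ofReal ((1 + (k : ℝ) ^ 2) ^ α * ‖c k‖ ^ 2) := by
  rw [eBracketWeighted, ← ENNReal.ofReal_pow (bracketWeighted_nonneg α c k), bracketWeighted,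
    one_add_sq_rpow, mul_pow]

-- Only `≤`: `seqNormSq` is `0` when its series diverges.
lemma ofReal_seqNormSq_le (α : ℝ) (c : ℤ → ℂ) :
    ENNReal.ofReal (seqNormSq α c) ≤ ∑' k, eBracketWeighted α c k ^ 2 := by
  simp only [eBracketWeighted_sq, seqNormSq]
  by_cases h : Summable fun k : ℤ => (1 + (k : ℝ) ^ 2) ^ α * ‖c k‖ ^ 2
  · exact (ENNReal.ofReal_tsum_of_nonneg (fun k => by positivity) h).le
  · simp [tsum_eq_zero_of_not_summable h]

lemma tsum_eBracketWeighted_fc_cconj_sq {α : ℝ} {f : 𝕋 → ℂ} (hf : MemH α f) :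
    ∑' k, eBracketWeighted α (fc (cconj f)) k ^ 2 = ENNReal.ofReal (sNormSq α f) := by
  have hneg : ∀ k, eBracketWeighted α (fc (cconj f)) k = eBracketWeighted α (fc f) (-k) :=
    fun k => by
      rw [eBracketWeighted, eBracketWeighted, bracketWeighted, bracketWeighted, norm_fc_cconj,
        Int.cast_neg, bracket_neg]
  simp only [hneg]
  refine ((Equiv.neg ℤ).tsum_eq (eBracketWeighted α (fc f) · ^ 2)).trans ?_
  simp only [eBracketWeighted_sq]
  exact (ENNReal.ofReal_tsum_of_nonneg (fun k => by positivity) hf.2).symm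

def P1term (τ : ℝ) (f : 𝕋 → ℂ) (k j : ℤ) : ℂ :=
  ((j : ℂ) ^ 2 / (k : ℂ) ^ 2) *
    (∫ s in (0 : ℝ)..τ,
      (Complex.exp (-(2 * Complex.I * s * (((k - j : ℤ)) : ℂ) ^ 2)) - 1) *
      (Complex.exp (-(2 * Complex.I * s * (k : ℂ) * (j : ℂ))) - 1)) *
    fc (cconj f) j * fc (cconj f) (k - j)

lemma P1coef_eq_tsum {τ : ℝ} {f : 𝕋 → ℂ} {k : ℤ} (hk : k ≠ 0) :
    P1coef τ f k = ∑' j, P1term τ f k j :=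
  if_neg hk

lemma norm_P1term_le {τ : ℝ} (hτ : 0 ≤ τ) (f : 𝕋 → ℂ) (k j : ℤ) :
    ‖P1term τ f k j‖ ≤ ((j : ℝ) ^ 2 / (k : ℝ) ^ 2) *
      (2 * τ ^ 2 * min (((k : ℝ) - j) ^ 2) |(k : ℝ) * j|) *
      ‖fc (cconj f) j‖ * ‖fc (cconj f) (k - j)‖ := by
  have hI := norm_integral_exp_sub_one_mul_le hτ (((k : ℝ) - j) ^ 2) ((k : ℝ) * j)
  rw [abs_of_nonneg (sq_nonneg _)] at hI
  simp only [P1term, norm_mul, norm_div, norm_pow, Complex.norm_intCast, sq_abs]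
  gcongr
  refine (le_of_eq ?_).trans hI
  congr 2
  ext s
  push_cast
  ring_nf

def dxxBesselSym (α : ℝ) (j : ℤ) : ℝ := (j : ℝ) ^ 2 * bracket j ^ (-α)

lemma dxxBesselSym_nonneg (α : ℝ) (j : ℤ) : 0 ≤ dxxBesselSym α j :=
  mul_nonneg (sq_nonneg _) (Real.rpow_pos_of_pos (bracket_pos j) (-α)).le

lemma summable_dxxBesselSym_sq {α : ℝ} (hα : 5 / 2 < α) :
    Summable fun j : ℤ => dxxBesselSym α j ^ 2 := by
  refine (summable_bracket_rpow_neg (b := 2 * α - 4) (by linarith)).of_nonneg_of_le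
    (fun j => sq_nonneg _) fun j => ?_
  have hbj := bracket_pos j
  have hle : dxxBesselSym α j ≤ bracket j ^ (2 - α) := by
    rw [dxxBesselSym, sub_eq_add_neg, Real.rpow_add hbj, Real.rpow_two]
    exact mul_le_mul_of_nonneg_right (sq_le_bracket_sq j) (Real.rpow_pos_of_pos hbj _).le
  calc dxxBesselSym α j ^ 2 ≤ (bracket j ^ (2 - α)) ^ 2 :=
        pow_le_pow_left₀ (dxxBesselSym_nonneg α j) hle 2
    _ = bracket j ^ (-(2 * α - 4)) := by
        rw [← Real.rpow_mul_natCast hbj.le]; ring_nf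

lemma bracket_rpow_mul_norm_P1term_le {r α τ : ℝ} (hrα : r ≤ α) (hα : 2 ≤ α) (hτ : 0 ≤ τ)
    (f : 𝕋 → ℂ) {k : ℤ} (hk : k ≠ 0) (j : ℤ) :
    bracket k ^ r * ‖P1term τ f k j‖ ≤ 2 ^ (α + 1) * τ ^ 2 *
      (dxxBesselSym α j * (bracketWeighted α (fc (cconj f)) j *
          bracketWeighted α (fc (cconj f)) (k - j)) +
        bracketWeighted α (fc (cconj f)) j * (dxxBesselSym α (k - j) *
          bracketWeighted α (fc (cconj f)) (k - j))) := by
  have hk1 : 1 ≤ |(k : ℝ)| := by exact_mod_cast Int.one_le_abs hk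
  have hweight := bracket_rpow_mul_min_le hrα hα hk1 (j : ℝ)
  have hj := (Real.rpow_pos_of_pos (bracket_pos j) α).ne'
  have hkj := (Real.rpow_pos_of_pos (bracket_pos ((k - j : ℤ) : ℝ)) α).ne'
  calc bracket k ^ r * ‖P1term τ f k j‖
      ≤ bracket k ^ r * (((j : ℝ) ^ 2 / (k : ℝ) ^ 2) *
          (2 * τ ^ 2 * min (((k : ℝ) - j) ^ 2) |(k : ℝ) * j|) *
          ‖fc (cconj f) j‖ * ‖fc (cconj f) (k - j)‖) := by
        gcongr
        · exact (Real.rpow_pos_of_pos (bracket_pos k) r).le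
        · exact norm_P1term_le hτ f k j
    _ = 2 * τ ^ 2 * (bracket k ^ r * ((j : ℝ) ^ 2 / (k : ℝ) ^ 2) *
          min (((k : ℝ) - j) ^ 2) |(k : ℝ) * j|) *
          (‖fc (cconj f) j‖ * ‖fc (cconj f) (k - j)‖) := by ring
    _ ≤ 2 * τ ^ 2 * (2 ^ α * ((j : ℝ) ^ 2 * bracket ((k : ℝ) - j) ^ α +
          bracket (j : ℝ) ^ α * ((k : ℝ) - j) ^ 2)) *
          (‖fc (cconj f) j‖ * ‖fc (cconj f) (k - j)‖) := by gcongr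
    _ = _ := by
        simp only [dxxBesselSym, bracketWeighted]
        rw [Real.rpow_neg (bracket_pos _).le, Real.rpow_neg (bracket_pos _).le,
          Real.rpow_add_one two_ne_zero]
        push_cast at hkj ⊢
        field_simp

lemma bracket_rpow_mul_enorm_P1coef_le {r α τ : ℝ} (hrα : r ≤ α) (hα : 2 ≤ α) (hτ : 0 ≤ τ)
    (f : 𝕋 → ℂ) (k : ℤ) :
    ENNReal.ofReal (bracket k ^ r) * ‖P1coef τ f k‖ₑ ≤ ENNReal.ofReal (2 ^ (α + 2) * τ ^ 2) *
      ∑' j : ℤ, ENNReal.ofReal (dxxBesselSym α j) *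
        (eBracketWeighted α (fc (cconj f)) j * eBracketWeighted α (fc (cconj f)) (k - j)) := by
  by_cases hk : k = 0
  · simp [hk, P1coef]
  set b := eBracketWeighted α (fc (cconj f))
  set G : ℤ → ℝ≥0∞ := fun j => ENNReal.ofReal (dxxBesselSym α j)
  have hb := bracketWeighted_nonneg α (fc (cconj f))
  have hG := dxxBesselSym_nonneg α
  have hterm : ∀ j, ENNReal.ofReal (bracket k ^ r) * ‖P1term τ f k j‖ₑ ≤
      ENNReal.ofReal (2 ^ (α + 1) * τ ^ 2) *
        (G j * (b j * b (k - j)) + b j * (G (k - j) * b (k - j))) := by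
    intro j
    rw [← ofReal_norm, ← ENNReal.ofReal_mul (Real.rpow_pos_of_pos (bracket_pos k) r).le]
    refine (ENNReal.ofReal_le_ofReal (bracket_rpow_mul_norm_P1term_le hrα hα hτ f hk j)).trans_eq ?_
    simp only [b, G, eBracketWeighted]
    rw [ENNReal.ofReal_mul (by positivity),
      ENNReal.ofReal_add (by positivity [hb j, hG j, hb (k - j)])
        (by positivity [hb j, hG (k - j), hb (k - j)]),
      ENNReal.ofReal_mul (hG j), ENNReal.ofReal_mul (hb j), ENNReal.ofReal_mul (hb j),
      ENNReal.ofReal_mul (hG (k - j))]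
  have hswap : ∑' j, b j * (G (k - j) * b (k - j)) = ∑' j, G j * (b j * b (k - j)) := by
    rw [← (Equiv.subLeft k).tsum_eq]
    simp only [Equiv.subLeft_apply, sub_sub_cancel]
    exact tsum_congr fun j => by ring
  calc ENNReal.ofReal (bracket k ^ r) * ‖P1coef τ f k‖ₑ
      ≤ ENNReal.ofReal (bracket k ^ r) * ∑' j, ‖P1term τ f k j‖ₑ := by
        rw [P1coef_eq_tsum hk]
        gcongr
        exact enorm_tsum_le_tsum_enorm
    _ = ∑' j, ENNReal.ofReal (bracket k ^ r) * ‖P1term τ f k j‖ₑ := ENNReal.tsum_mul_left.symm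
    _ ≤ ∑' j, ENNReal.ofReal (2 ^ (α + 1) * τ ^ 2) *
          (G j * (b j * b (k - j)) + b j * (G (k - j) * b (k - j))) := ENNReal.tsum_le_tsum hterm
    _ = ENNReal.ofReal (2 ^ (α + 2) * τ ^ 2) * ∑' j, G j * (b j * b (k - j)) := by
        rw [ENNReal.tsum_mul_left, ENNReal.tsum_add, hswap, ← two_mul, ← mul_assoc,
          show (2 : ℝ) ^ (α + 2) * τ ^ 2 = 2 ^ (α + 1) * τ ^ 2 * 2 by
            rw [show α + 2 = (α + 1) + 1 by ring, Real.rpow_add_one two_ne_zero]; ring,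
          ENNReal.ofReal_mul (by positivity : (0 : ℝ) ≤ 2 ^ (α + 1) * τ ^ 2), ENNReal.ofReal_ofNat]

lemma seqNorm_P1coef_le {r α τ : ℝ} (hrα : r ≤ α) (hα : 5 / 2 < α) (hτ : 0 ≤ τ) {f : 𝕋 → ℂ}
    (hf : MemH α f) :
    seqNorm r (P1coef τ f) ≤
      2 ^ (α + 2) * √(∑' j : ℤ, dxxBesselSym α j ^ 2) * τ ^ 2 * sNorm α f ^ 2 := by
  set S := ∑' j : ℤ, dxxBesselSym α j ^ 2
  set Q := sNormSq α f
  set K := 2 ^ (α + 2) * τ ^ 2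
  have hS0 : 0 ≤ S := tsum_nonneg fun j => sq_nonneg _
  have hQ0 : 0 ≤ Q := tsum_nonneg fun k => by positivity
  have hS : ∑' j, ENNReal.ofReal (dxxBesselSym α j) ^ 2 = ENNReal.ofReal S := by
    simp_rw [← ENNReal.ofReal_pow (dxxBesselSym_nonneg α _)]
    exact (ENNReal.ofReal_tsum_of_nonneg (fun j => sq_nonneg _) (summable_dxxBesselSym_sq hα)).symm
  have hsq : ENNReal.ofReal (seqNormSq r (P1coef τ f)) ≤ ENNReal.ofReal (K ^ 2 * S * Q ^ 2) :=
    calc ENNReal.ofReal (seqNormSq r (P1coef τ f))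
        ≤ ∑' k, eBracketWeighted r (P1coef τ f) k ^ 2 := ofReal_seqNormSq_le r _
      _ ≤ ∑' k, (ENNReal.ofReal K * ∑' j : ℤ, ENNReal.ofReal (dxxBesselSym α j) *
            (eBracketWeighted α (fc (cconj f)) j *
              eBracketWeighted α (fc (cconj f)) (k - j))) ^ 2 := by
          refine ENNReal.tsum_le_tsum fun k => pow_le_pow_left' ?_ 2
          rw [eBracketWeighted, bracketWeighted,
            ENNReal.ofReal_mul (Real.rpow_pos_of_pos (bracket_pos k) r).le, ofReal_norm]
          exact bracket_rpow_mul_enorm_P1coef_le hrα (by linarith) hτ f k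
      _ ≤ ENNReal.ofReal K ^ 2 * ((∑' j, ENNReal.ofReal (dxxBesselSym α j) ^ 2) *
            (∑' j, eBracketWeighted α (fc (cconj f)) j ^ 2) ^ 2) := by
          simp_rw [mul_pow, ENNReal.tsum_mul_left]
          gcongr
          exact ENNReal.tsum_sq_tsum_mul_mul_sub_le _ _
      _ = ENNReal.ofReal (K ^ 2 * S * Q ^ 2) := by
          rw [hS, tsum_eBracketWeighted_fc_cconj_sq hf, ← ENNReal.ofReal_pow (by positivity),
            ← ENNReal.ofReal_pow hQ0, ← ENNReal.ofReal_mul hS0,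
            ← ENNReal.ofReal_mul (by positivity), mul_assoc]
  have hsq' := (ENNReal.ofReal_le_ofReal_iff (by positivity)).1 hsq
  calc seqNorm r (P1coef τ f) ≤ √(K ^ 2 * S * Q ^ 2) := Real.sqrt_le_sqrt hsq'
    _ = 2 ^ (α + 2) * √S * τ ^ 2 * sNorm α f ^ 2 := by
        rw [sNorm, Real.sq_sqrt hQ0, show K ^ 2 * S * Q ^ 2 = (K * Q) ^ 2 * S by ring,
          Real.sqrt_mul (by positivity), Real.sqrt_sq (by positivity)]
        ring

theorem stmt16_general (β r : ℝ) (hβ1 : 0 ≤ β) (hr : 5/2 - β < r) :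
    ∃ C > (0:ℝ), ∀ τ : ℝ, 0 < τ → ∀ f : 𝕋 → ℂ, MemH (r + 2*β) f →
      seqNorm r (P1coef τ f) ≤ C * τ^2 * (sNorm (r + 2*β) f)^2 := by
  have hα : 5 / 2 < r + 2 * β := by linarith
  have hS : 0 < ∑' j : ℤ, dxxBesselSym (r + 2 * β) j ^ 2 :=
    (summable_dxxBesselSym_sq hα).tsum_pos (fun j => sq_nonneg _) 1
      (pow_pos (mul_pos (by norm_num) (Real.rpow_pos_of_pos (bracket_pos _) _)) 2)
  exact ⟨_, by positivity, fun τ hτ f hf => seqNorm_P1coef_le (by linarith) hα hτ.le hf⟩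

theorem stmt16 (β r : ℝ) (hβ1 : 0 ≤ β) (hβ2 : β ≤ 1) (hr : 5/2 - β < r) :
    ∃ C > (0:ℝ), ∀ τ : ℝ, 0 < τ → ∀ f : 𝕋 → ℂ, MemH (r + 2*β) f →
      seqNorm r (P1coef τ f) ≤ C * τ^2 * (sNorm (r + 2*β) f)^2 :=
  stmt16_general β r hβ1 hr
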